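/- arXiv:0912.4360 — 3 statements merged into one kernel-verified Lean document; each statement's English description precedes it below -/
import Mathlib

section
/- The pair (≿_ℕ, ≻_ℕ) on polynomials over ℕ is a reduction pair: ≿_ℕ is reflexive and transitive, ≻_ℕ is transitive and well-founded, and they are compatible, i.e., p ≿_ℕ q ≻_ℕ r implies p ≻_ℕ r. -/
/-- `(≿_ℕ, ≻_ℕ)` on polynomials over ℕ is a reduction pair. -/
theorem poly_reduction_pair (σ : Type*) :
    -- ≿ is reflexive
    (∀ p : MvPolynomial σ ℕ, ∀ x : σ → ℕ,
        MvPolynomial.eval x p ≤ MvPolynomial.eval x p) ∧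
    -- ≿ is transitive
    (∀ p q r : MvPolynomial σ ℕ,
        (∀ x : σ → ℕ, MvPolynomial.eval x q ≤ MvPolynomial.eval x p) →
        (∀ x : σ → ℕ, MvPolynomial.eval x r ≤ MvPolynomial.eval x q) →
        (∀ x : σ → ℕ, MvPolynomial.eval x r ≤ MvPolynomial.eval x p)) ∧
    -- ≻ is transitive
    (∀ p q r : MvPolynomial σ ℕ,
        (∀ x : σ → ℕ, MvPolynomial.eval x q < MvPolynomial.eval x p) →
        (∀ x : σ → ℕ, MvPolynomial.eval x r < MvPolynomial.eval x q) →
        (∀ x : σ → ℕ, MvPolynomial.eval x r < MvPolynomial.eval x p)) ∧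
    -- ≻ is well-founded
    WellFounded (fun q p : MvPolynomial σ ℕ =>
      ∀ x : σ → ℕ, MvPolynomial.eval x q < MvPolynomial.eval x p) ∧
    -- compatibility: p ≿ q ≻ r implies p ≻ r
    (∀ p q r : MvPolynomial σ ℕ,
        (∀ x : σ → ℕ, MvPolynomial.eval x q ≤ MvPolynomial.eval x p) →
        (∀ x : σ → ℕ, MvPolynomial.eval x r < MvPolynomial.eval x q) →
        (∀ x : σ → ℕ, MvPolynomial.eval x r < MvPolynomial.eval x p)) := by
  refine ⟨fun p x => le_refl _,
    fun p q r h1 h2 x => (h2 x).trans (h1 x),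
    fun p q r h1 h2 x => (h2 x).trans (h1 x),
    ?_,
    fun p q r h1 h2 x => lt_of_lt_of_le (h2 x) (h1 x)⟩
  have : Subrelation (fun q p : MvPolynomial σ ℕ =>
      ∀ x : σ → ℕ, MvPolynomial.eval x q < MvPolynomial.eval x p)
      (InvImage (· < ·) (MvPolynomial.eval (fun _ : σ => 0))) :=
    fun h => h _
  exact this.wf (InvImage.wf _ Nat.lt_wfRel.wf)
end

section
/- Soundness of removing implications: let prem : ℕⁿ → ℕ and conc : ℕ → ℕ be polynomial functions with natural coefficients, with conc not constant (hence strictly monotonic). Let p₁,...,pₙ₊₁, q₁,...,qₙ₊₁ be polynomial functions with natural coefficients in variables X̄. If for all x̄ ∈ ℕᵏ, conc(pₙ₊₁(x̄)) − conc(qₙ₊₁(x̄)) − prem(p₁(x̄),...,pₙ(x̄)) + prem(q₁(x̄),...,qₙ(x̄)) ≥ 0 (as integers), then for all x̄ ∈ ℕᵏ: (p₁(x̄) ≥ q₁(x̄) ∧ ... ∧ pₙ(x̄) ≥ qₙ(x̄)) → pₙ₊₁(x̄) ≥ qₙ₊₁(x̄). -/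
private lemma mveval_mono {n : ℕ} (P : MvPolynomial (Fin n) ℕ)
    {f g : Fin n → ℕ} (hfg : ∀ i, f i ≤ g i) :
    MvPolynomial.eval f P ≤ MvPolynomial.eval g P := by
  induction P using MvPolynomial.induction_on with
  | C a => simp
  | add p q hp hq => simpa using add_le_add hp hq
  | mul_X p i hp => simpa using Nat.mul_le_mul hp (hfg i)

private lemma conc_strictMono (conc : Polynomial ℕ)
    (hconc : ∃ m, 1 ≤ m ∧ conc.coeff m ≠ 0) :
    StrictMono fun x : ℕ => conc.eval x := by
  obtain ⟨m, hm1, hm⟩ := hconc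
  intro a b hab
  simp only []
  show conc.eval a < conc.eval b
  rw [Polynomial.eval_eq_sum_range, Polynomial.eval_eq_sum_range]
  have hmem : m ∈ Finset.range (conc.natDegree + 1) := by
    simp [Nat.lt_succ_iff, Polynomial.le_natDegree_of_ne_zero hm]
  apply Finset.sum_lt_sum
  · intro i _
    exact Nat.mul_le_mul_left _ (Nat.pow_le_pow_left hab.le i)
  · refine ⟨m, hmem, ?_⟩
    exact Nat.mul_lt_mul_of_le_of_lt (le_refl _)
      (Nat.pow_lt_pow_left hab (by omega)) (Nat.pos_of_ne_zero hm)

/-- Soundness of removing implications: if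
`conc(p_{n+1}(x̄)) − conc(q_{n+1}(x̄)) − prem(p₁(x̄),…,pₙ(x̄)) + prem(q₁(x̄),…,qₙ(x̄)) ≥ 0`
(in ℤ) holds for all natural arguments, where all polynomials have natural
coefficients and `conc` is not constant, then
`p₁(x̄) ≥ q₁(x̄) ∧ … ∧ pₙ(x̄) ≥ qₙ(x̄) → p_{n+1}(x̄) ≥ q_{n+1}(x̄)` holds
for all natural arguments. -/
theorem soundness_removing_implications (n k : ℕ)
    (prem : MvPolynomial (Fin n) ℕ) (conc : Polynomial ℕ)
    (hconc : ∃ m, 1 ≤ m ∧ conc.coeff m ≠ 0)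
    (p q : Fin (n + 1) → MvPolynomial (Fin k) ℕ)
    (h : ∀ x : Fin k → ℕ,
      0 ≤ ((conc.eval (MvPolynomial.eval x (p (Fin.last n))) : ℕ) : ℤ)
          - ((conc.eval (MvPolynomial.eval x (q (Fin.last n))) : ℕ) : ℤ)
          - ((MvPolynomial.eval (fun i => MvPolynomial.eval x (p i.castSucc)) prem : ℕ) : ℤ)
          + ((MvPolynomial.eval (fun i => MvPolynomial.eval x (q i.castSucc)) prem : ℕ) : ℤ)) :
    ∀ x : Fin k → ℕ,
      (∀ i : Fin n,
        MvPolynomial.eval x (q i.castSucc) ≤ MvPolynomial.eval x (p i.castSucc)) →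
      MvPolynomial.eval x (q (Fin.last n)) ≤ MvPolynomial.eval x (p (Fin.last n)) := by
  intro x hpq
  have hprem : MvPolynomial.eval (fun i => MvPolynomial.eval x (q i.castSucc)) prem
      ≤ MvPolynomial.eval (fun i => MvPolynomial.eval x (p i.castSucc)) prem :=
    mveval_mono prem hpq
  have hc : conc.eval (MvPolynomial.eval x (q (Fin.last n)))
      ≤ conc.eval (MvPolynomial.eval x (p (Fin.last n))) := by
    have := h x
    omega
  exact (conc_strictMono conc hconc).le_iff_le.mp hc
end

section
/- A term or atom A is rigid with respect to a polynomial interpretation I if and only if A has no relevant variables with respect to I, where a variable X in A is relevant if there exists a substitution {X → t} such that |A{X → t}|_I is not equal (as a polynomial function on ℕ) to |A|_I. -/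
/-- Terms over a signature `F` with arities `ar` and variables `V`. -/
inductive Tm (F V : Type) (ar : F → ℕ) : Type
  | var : V → Tm F V ar
  | fn : (f : F) → (Fin (ar f) → Tm F V ar) → Tm F V ar

/-- Level mapping induced by a polynomial interpretation `I`:
`|X|_I = X` and `|f(t₁,…,tₙ)|_I = p_f(|t₁|_I,…,|tₙ|_I)`. -/
noncomputable def lvl {F V : Type} {ar : F → ℕ}
    (I : ∀ f : F, MvPolynomial (Fin (ar f)) ℕ) : Tm F V ar → MvPolynomial V ℕ
  | .var v => MvPolynomial.X v
  | .fn f ts => MvPolynomial.eval₂ MvPolynomial.C (fun i => lvl I (ts i)) (I f)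

/-- Applying a substitution to a term. -/
def Tm.subst {F V : Type} {ar : F → ℕ} (σ : V → Tm F V ar) :
    Tm F V ar → Tm F V ar
  | .var v => σ v
  | .fn f ts => .fn f (fun i => (ts i).subst σ)

/-- A term `A` is rigid w.r.t. `I` iff `|Aσ|_I = |A|_I` as functions on ℕ
for every substitution `σ`. -/
def Rigid {F V : Type} {ar : F → ℕ} (I : ∀ f : F, MvPolynomial (Fin (ar f)) ℕ)
    (A : Tm F V ar) : Prop :=
  ∀ σ : V → Tm F V ar, ∀ x : V → ℕ,
    MvPolynomial.eval x (lvl I (A.subst σ)) = MvPolynomial.eval x (lvl I A)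

/-- A variable `X` is relevant in `A` w.r.t. `I` iff substituting some term `t`
for `X` changes the level mapping as a function on ℕ. -/
def Relevant {F V : Type} [DecidableEq V] {ar : F → ℕ}
    (I : ∀ f : F, MvPolynomial (Fin (ar f)) ℕ) (X : V) (A : Tm F V ar) : Prop :=
  ∃ t : Tm F V ar, ∃ x : V → ℕ,
    MvPolynomial.eval x (lvl I (A.subst (Function.update Tm.var X t))) ≠
      MvPolynomial.eval x (lvl I A)

open MvPolynomial in
/-- eval of a substituted term equals eval of the original at the shifted point. -/
lemma eval_lvl_subst {F V : Type} {ar : F → ℕ}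
    (I : ∀ f : F, MvPolynomial (Fin (ar f)) ℕ) (σ : V → Tm F V ar)
    (x : V → ℕ) : ∀ A : Tm F V ar,
    MvPolynomial.eval x (lvl I (A.subst σ)) =
      MvPolynomial.eval (fun v => MvPolynomial.eval x (lvl I (σ v))) (lvl I A)
  | .var v => by simp [Tm.subst, lvl]
  | .fn f ts => by
    simp only [Tm.subst, lvl, eval_eval₂]
    have hC : ((eval x : MvPolynomial V ℕ →+* ℕ).comp C) =
        ((eval (fun v => MvPolynomial.eval x (lvl I (σ v))) :
          MvPolynomial V ℕ →+* ℕ).comp C) := Subsingleton.elim _ _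
    rw [hC]
    congr 1
    funext i
    exact eval_lvl_subst I σ x (ts i)

open MvPolynomial in
/-- eval only depends on the values at the variables of the polynomial. -/
lemma eval_agree {V : Type} (p : MvPolynomial V ℕ) {x y : V → ℕ}
    (h : ∀ v ∈ p.vars, x v = y v) :
    MvPolynomial.eval x p = MvPolynomial.eval y p := by
  refine hom_congr_vars (Subsingleton.elim _ _) (fun i hi _ => ?_) rfl
  simpa using h i hi

/-- A term or atom is rigid w.r.t. a polynomial interpretation iff it has no
relevant variables w.r.t. that interpretation. -/
theorem rigid_iff_no_relevant_variables {F V : Type} [DecidableEq V]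
    {ar : F → ℕ} (I : ∀ f : F, MvPolynomial (Fin (ar f)) ℕ) (A : Tm F V ar) :
    Rigid I A ↔ ∀ X : V, ¬ Relevant I X A := by
  classical
  set p := lvl I A with hp
  -- reformulate both sides via `eval_lvl_subst`
  constructor
  · rintro hR X ⟨t, x, hne⟩
    exact hne (hR _ x)
  · intro hNR σ x
    rw [eval_lvl_subst]
    -- key: the single-variable consequence of non-relevance
    have key : ∀ (X : V) (t : Tm F V ar) (z : V → ℕ),
        MvPolynomial.eval
          (Function.update z X (MvPolynomial.eval z (lvl I t))) p =
          MvPolynomial.eval z p := by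
      intro X t z
      have h := hNR X
      rw [Relevant, not_exists] at h
      have h2 := h t
      rw [not_exists] at h2
      have h3 := not_not.mp (h2 z)
      rw [eval_lvl_subst] at h3
      have : (fun v => MvPolynomial.eval z (lvl I (Function.update Tm.var X t v)))
          = Function.update z X (MvPolynomial.eval z (lvl I t)) := by
        funext v
        by_cases hv : v = X
        · subst hv; simp
        · simp [Function.update_of_ne hv, lvl]
      rwa [this] at h3
    by_cases hV : ∃ a b : V, a ≠ b
    · -- at least two variables: `p` is constant as a function
      obtain ⟨a, b, hab⟩ := hV
      -- coordinate independence
      have indep : ∀ (X : V) (c : ℕ) (z : V → ℕ),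
          MvPolynomial.eval (Function.update z X c) p = MvPolynomial.eval z p := by
        intro X c z
        obtain ⟨w, hw⟩ : ∃ w : V, w ≠ X := by
          by_cases hXa : X = a
          · exact ⟨b, by simp [hXa, Ne.symm hab]⟩
          · exact ⟨a, Ne.symm hXa⟩
        set pt : ℕ → ℕ → (V → ℕ) :=
          fun u v => Function.update (Function.update z X u) w v with hpt
        -- copy w into X
        have copy1 : ∀ u v : ℕ,
            MvPolynomial.eval (pt u v) p = MvPolynomial.eval (pt v v) p := by
          intro u v
          have := key X (Tm.var w) (pt u v)
          rw [show (MvPolynomial.eval (pt u v) (lvl I (Tm.var w))) = v by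
                simp [lvl, hpt, Function.update_self]] at this
          have hpteq : Function.update (pt u v) X v = pt v v := by
            funext s
            by_cases hs : s = X
            · subst hs
              simp [hpt, Function.update_of_ne (Ne.symm hw), Function.update_self]
            · by_cases hs' : s = w
              · subst hs'; simp [hpt, Function.update_of_ne hw, Function.update_self]
              · simp [hpt, Function.update_of_ne hs, Function.update_of_ne hs']
          rw [hpteq] at this
          exact this.symm
        -- copy X into w
        have copy2 : ∀ u v : ℕ,
            MvPolynomial.eval (pt u v) p = MvPolynomial.eval (pt u u) p := by
          intro u v
          have := key w (Tm.var X) (pt u v)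
          rw [show (MvPolynomial.eval (pt u v) (lvl I (Tm.var X))) = u by
                simp [lvl, hpt, Function.update_of_ne (Ne.symm hw), Function.update_self]] at this
          have hpteq : Function.update (pt u v) w u = pt u u := by
            funext s
            by_cases hs : s = w
            · subst hs; simp [hpt, Function.update_self]
            · simp [hpt, Function.update_of_ne hs]
          rw [hpteq] at this
          exact this.symm
        have diag : ∀ u v : ℕ,
            MvPolynomial.eval (pt u u) p = MvPolynomial.eval (pt v v) p := by
          intro u v
          rw [← copy2 u v, copy1 u v]
        have e1 : Function.update z X c = pt c (z w) := by
          funext s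
          by_cases hs : s = w
          · subst hs; simp [hpt, Function.update_self, Function.update_of_ne hw]
          · by_cases hs' : s = X
            · subst hs'; simp [hpt, Function.update_of_ne (Ne.symm hw), Function.update_self]
            · simp [hpt, Function.update_of_ne hs, Function.update_of_ne hs']
        have e2 : z = pt (z X) (z w) := by
          funext s
          by_cases hs : s = w
          · subst hs; simp [hpt, Function.update_self]
          · by_cases hs' : s = X
            · subst hs'; simp [hpt, Function.update_of_ne (Ne.symm hw), Function.update_self]
            · simp [hpt, Function.update_of_ne hs, Function.update_of_ne hs']
        rw [e1, copy1 c (z w)]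
        conv_rhs => rw [e2, copy1 (z X) (z w)]
      -- hence `eval` is a constant function
      have const : ∀ z z' : V → ℕ,
          MvPolynomial.eval z p = MvPolynomial.eval z' p := by
        intro z z'
        -- change coordinates of z to z' one variable (of p.vars) at a time
        have main : ∀ s : Finset V, ∀ u u' : V → ℕ, (∀ v ∉ s, u v = u' v) →
            MvPolynomial.eval u p = MvPolynomial.eval u' p := by
          intro s
          induction s using Finset.induction_on with
          | empty =>
            intro u u' h
            have : u = u' := funext fun v => h v (by simp)
            rw [this]
          | @insert v s hv ih =>
            intro u u' h
            have h1 : MvPolynomial.eval u p =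
                MvPolynomial.eval (Function.update u v (u' v)) p :=
              (indep v (u' v) u).symm
            rw [h1]
            apply ih
            intro w hw
            by_cases hwv : w = v
            · subst hwv; simp
            · rw [Function.update_of_ne hwv]
              exact h w (by simp [hwv, hw])
        -- first fix z off p.vars to agree with z'
        set z'' : V → ℕ := fun v => if v ∈ p.vars then z v else z' v with hz''
        have hzz'' : MvPolynomial.eval z p = MvPolynomial.eval z'' p :=
          eval_agree p (fun v hv => by simp [hz'', hv])
        rw [hzz'']
        exact main p.vars z'' z' (fun v hv => by simp [hz'', hv])
      exact const _ x
    · -- `V` is a subsingleton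
      push_neg at hV
      by_cases hne : Nonempty V
      · obtain ⟨X⟩ := hne
        have := key X (σ X) x
        have hpteq : (fun v => MvPolynomial.eval x (lvl I (σ v))) =
            Function.update x X (MvPolynomial.eval x (lvl I (σ X))) := by
          funext v
          have hvX : v = X := hV v X
          subst hvX
          simp
        rw [hpteq, this]
      · have : (fun v => MvPolynomial.eval x (lvl I (σ v))) = x := by
          funext v
          exact absurd ⟨v⟩ hne
        rw [this]
end
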